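/- arXiv:2304.01806 — 2 statements merged into one kernel-verified Lean document; each statement's English description precedes it below -/
import Mathlib

section
/- For single-machine scheduling with equal processing times p and release dates, the set of possible completion times over all active schedules has cardinality at most n². -/
/-- Feasibility of a single-machine schedule with common processing time `p`
and release dates `r`. -/
def FeasibleSched {n : ℕ} (r : Fin n → ℝ) (p : ℝ) (S : Fin n → ℝ) : Prop :=
  (∀ j, r j ≤ S j) ∧ ∀ i j, i ≠ j → (S i + p ≤ S j ∨ S j + p ≤ S i)

/-- A schedule is active if no single job can start strictly earlier, keeping
all other start times fixed, while preserving feasibility. -/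
def ActiveSched {n : ℕ} (r : Fin n → ℝ) (p : ℝ) (S : Fin n → ℝ) : Prop :=
  FeasibleSched r p S ∧
    ∀ j t, t < S j → ¬ FeasibleSched r p (Function.update S j t)

/-! An active schedule starts every job either at its release date or at the completion time
of another job: otherwise the job could be moved left to the latest of these candidate times
without creating an overlap. Since `p > 0` that other job starts strictly earlier, so
following such links backwards ends at a release date `r i` after `l` steps, where `l` is at
most the number of jobs starting before the given one, hence `l < n`. Thus every completion
time is `r i + (l + 1) * p` for one of the `n²` pairs `(i, l)`. -/

open Finset

theorem Finset.card_filter_lt_lt_card_filter_lt {α β : Type*} [Fintype α] [Preorder β]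
    [DecidableLT β] {f : α → β} {a b : α} (h : f a < f b) :
    #{x | f x < f a} < #{x | f x < f b} :=
  card_lt_card ⟨monotone_filter_right _ fun _ _ hx => hx.trans h,
    fun hsub => lt_irrefl (f a) (mem_filter.mp (hsub (mem_filter.mpr ⟨mem_univ a, h⟩))).2⟩

theorem Finset.card_filter_lt_lt_card {α β : Type*} [Fintype α] [Preorder β] [DecidableLT β]
    (f : α → β) (b : α) : #{x | f x < f b} < Fintype.card α :=
  card_lt_univ_of_notMem (x := b) (by simp)

section Schedules

variable {n : ℕ} {r : Fin n → ℝ} {p : ℝ} {S : Fin n → ℝ}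

theorem FeasibleSched.update_of_le (hS : FeasibleSched r p S) {j : Fin n} {t : ℝ}
    (hrt : r j ≤ t) (htS : t ≤ S j) (hprev : ∀ k, k ≠ j → S k + p ≤ S j → S k + p ≤ t) :
    FeasibleSched r p (Function.update S j t) := by
  refine ⟨fun k => ?_, fun a b hab => ?_⟩
  · rcases eq_or_ne k j with rfl | hk
    · simpa using hrt
    · simpa [hk] using hS.1 k
  · rcases eq_or_ne a j with rfl | ha
    · simp only [Function.update_self, Function.update_of_ne hab.symm]
      rcases hS.2 a b hab with h | h
      exacts [Or.inl (by linarith), Or.inr (hprev b hab.symm h)]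
    · rcases eq_or_ne b j with rfl | hb
      · simp only [Function.update_self, Function.update_of_ne ha]
        rcases hS.2 a b hab with h | h
        exacts [Or.inl (hprev a ha h), Or.inr (by linarith)]
      · simpa [ha, hb] using hS.2 a b hab

theorem ActiveSched.eq_release_or_eq_completion (hA : ActiveSched r p S) (j : Fin n) :
    S j = r j ∨ ∃ k, k ≠ j ∧ S j = S k + p := by
  by_contra! h
  -- the latest release date or earlier completion time is a feasible, strictly earlier start
  set F := insert (r j) (({k | k ≠ j ∧ S k + p ≤ S j} : Finset (Fin n)).image (S · + p))
  have hF : ∀ x ∈ F, x < S j := by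
    simp only [F, mem_insert, mem_image, mem_filter, mem_univ, true_and]
    rintro x (rfl | ⟨k, ⟨hk, hle⟩, rfl⟩)
    exacts [(hA.1.1 j).lt_of_ne' h.1, hle.lt_of_ne' (h.2 k hk)]
  have hne : F.Nonempty := insert_nonempty _ _
  refine hA.2 j _ (hF _ (F.max'_mem hne)) (hA.1.update_of_le (F.le_max' _ (mem_insert_self _ _))
    (hF _ (F.max'_mem hne)).le fun k hk hle => F.le_max' _ (mem_insert_of_mem ?_))
  exact mem_image_of_mem _ (by simp [hk, hle])

theorem ActiveSched.exists_eq_release_add_mul (hp : 0 < p) (hA : ActiveSched r p S)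
    (j : Fin n) : ∃ i, ∃ l : ℕ, l ≤ #{k | S k < S j} ∧ S j = r i + l * p := by
  induction hm : #{k | S k < S j} using Nat.strong_induction_on generalizing j with
  | _ m ih =>
  rcases hA.eq_release_or_eq_completion j with hj | ⟨k, -, hjk⟩
  · exact ⟨j, 0, Nat.zero_le _, by simp [hj]⟩
  · have hkj : S k < S j := by linarith
    have hrank := card_filter_lt_lt_card_filter_lt hkj
    obtain ⟨i, l, hl, hk⟩ := ih _ (hm ▸ hrank) k rfl
    refine ⟨i, l + 1, by omega, ?_⟩
    rw [hjk, hk]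
    push_cast
    ring

end Schedules

theorem card_completion_times_le_general {n : ℕ} (r : Fin n → ℝ) (p : ℝ)
    (hp : 0 < p) :
    Set.ncard {t : ℝ | ∃ S : Fin n → ℝ, ActiveSched r p S ∧
      ∃ j : Fin n, t = S j + p} ≤ n ^ 2 := by
  let θ : Fin n × Fin n → ℝ := fun q => r q.1 + ((q.2 : ℕ) + 1) * p
  have hsub : {t : ℝ | ∃ S : Fin n → ℝ, ActiveSched r p S ∧
      ∃ j : Fin n, t = S j + p} ⊆ Set.range θ := by
    rintro t ⟨S, hA, j, rfl⟩
    obtain ⟨i, l, hl, hj⟩ := hA.exists_eq_release_add_mul hp j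
    have hln : l < n := by simpa using hl.trans_lt (card_filter_lt_lt_card S j)
    exact ⟨(i, ⟨l, hln⟩), by simp only [θ, hj]; ring⟩
  calc Set.ncard _ ≤ (Set.range θ).ncard := Set.ncard_le_ncard hsub (Set.finite_range θ)
    _ ≤ Nat.card (Fin n × Fin n) := Finite.card_range_le θ
    _ = n ^ 2 := by simp [sq]

/-- The set of possible completion times over all active schedules has
cardinality at most `n²`. -/
theorem card_completion_times_le {n : ℕ} (r : Fin n → ℝ) (p : ℝ)
    (hp : 0 < p) (hr : ∀ j, 0 ≤ r j) :
    Set.ncard {t : ℝ | ∃ S : Fin n → ℝ, ActiveSched r p S ∧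
      ∃ j : Fin n, t = S j + p} ≤ n ^ 2 :=
  card_completion_times_le_general r p hp
end

section
/- For the single-machine problem of minimizing total completion time with arbitrary release dates and equal processing times (no precedence constraints), scheduling jobs in nondecreasing order of release dates, starting each as early as possible, is optimal. -/
/-- Completion time of the job in position `k` when jobs with release dates
`rs 0, rs 1, …` (in processing order) and common processing time `p` are
started as early as possible one after the other. -/
def compTime (p : ℝ) (rs : ℕ → ℝ) : ℕ → ℝ
  | 0 => rs 0 + p
  | k + 1 => max (rs (k + 1)) (compTime p rs k) + p

/-- Release dates in processing order for the permutation `π`. -/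
noncomputable def relSeq {n : ℕ} (r : Fin n → ℝ) (π : Equiv.Perm (Fin n)) : ℕ → ℝ :=
  fun k => if h : k < n then r (π ⟨k, h⟩) else 0

lemma compTime_le_iff (p : ℝ) (rs : ℕ → ℝ) (k : ℕ) (C : ℝ) :
    compTime p rs k ≤ C ↔ ∀ i ≤ k, rs i + ((k + 1 - i : ℕ) : ℝ) * p ≤ C := by
  induction k generalizing C with
  | zero =>
    constructor
    · intro h i hi
      interval_cases i
      simpa [compTime] using h
    · intro h
      simpa [compTime] using h 0 le_rfl
  | succ k ih =>
    rw [compTime, ← le_sub_iff_add_le, max_le_iff]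
    constructor
    · rintro ⟨h1, h2⟩ i hi
      rcases Nat.eq_or_lt_of_le hi with rfl | hlt
      · have : (k + 1 + 1 - (k + 1) : ℕ) = 1 := by omega
        rw [this]
        push_cast
        linarith
      · have hik : i ≤ k := Nat.lt_succ_iff.mp hlt
        have := (ih (C - p)).1 h2 i hik
        have he : (k + 1 + 1 - i : ℕ) = (k + 1 - i) + 1 := by omega
        rw [he]
        push_cast
        linarith
    · intro h
      constructor
      · have := h (k + 1) le_rfl
        have he : (k + 1 + 1 - (k + 1) : ℕ) = 1 := by omega
        rw [he] at this
        push_cast at this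
        linarith
      · refine (ih (C - p)).2 fun i hik => ?_
        have := h i (hik.trans (Nat.le_succ k))
        have he : (k + 1 + 1 - i : ℕ) = (k + 1 - i) + 1 := by omega
        rw [he] at this
        push_cast at this
        linarith

lemma le_compTime (p : ℝ) (rs : ℕ → ℝ) {i k : ℕ} (hik : i ≤ k) :
    rs i + ((k + 1 - i : ℕ) : ℝ) * p ≤ compTime p rs k :=
  (compTime_le_iff p rs k _).1 le_rfl i hik

/-- The key counting step: if `π` sorts `r` nondecreasingly, then for any `σ`
and any position `j ≤ k < n`, some job among the first `j+1` positions of `σ`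
has release date at least the `j`-th sorted release date. -/
lemma exists_early_big {n : ℕ} (r : Fin n → ℝ) (π σ : Equiv.Perm (Fin n))
    (hsorted : ∀ k l : Fin n, k ≤ l → r (π k) ≤ r (π l))
    {j k : ℕ} (hj : j ≤ k) (hk : k < n) :
    ∃ i ≤ j, r (π ⟨j, lt_of_le_of_lt hj hk⟩) ≤ relSeq r σ i := by
  set jf : Fin n := ⟨j, lt_of_le_of_lt hj hk⟩ with hjf
  set kf : Fin n := ⟨k, hk⟩ with hkf
  set v : ℝ := r (π jf) with hv
  -- bad jobs: those with release date < v; there are at most j of them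
  set Bad : Finset (Fin n) := Finset.univ.filter (fun a => r a < v) with hBad
  have hBadCard : Bad.card ≤ j := by
    have hsub : Bad ⊆ (Finset.Iio jf).image π := by
      intro a ha
      have hav : r a < v := (Finset.mem_filter.mp ha).2
      refine Finset.mem_image.mpr ⟨π⁻¹ a, ?_, by simp⟩
      rw [Finset.mem_Iio]
      by_contra hle
      have : jf ≤ π⁻¹ a := not_lt.mp hle
      have := hsorted jf (π⁻¹ a) this
      simp at this
      exact absurd (lt_of_le_of_lt this hav) (lt_irrefl _)
    calc Bad.card ≤ ((Finset.Iio jf).image π).card := Finset.card_le_card hsub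
      _ ≤ (Finset.Iio jf).card := Finset.card_image_le
      _ = j := by simp [Fin.card_Iio, hjf]
  -- among the first k+1 positions of σ, at most j have small release date
  set Small : Finset (Fin n) := (Finset.Iic kf).filter (fun i => r (σ i) < v) with hSmall
  have hSmallCard : Small.card ≤ j := by
    have hsub : Small.image σ ⊆ Bad := by
      intro a ha
      obtain ⟨i, hi, rfl⟩ := Finset.mem_image.mp ha
      exact Finset.mem_filter.mpr ⟨Finset.mem_univ _, (Finset.mem_filter.mp hi).2⟩
    have : (Small.image σ).card = Small.card :=
      Finset.card_image_of_injective _ σ.injective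
    calc Small.card = (Small.image σ).card := this.symm
      _ ≤ Bad.card := Finset.card_le_card hsub
      _ ≤ j := hBadCard
  set T : Finset (Fin n) := (Finset.Iic kf).filter (fun i => ¬ r (σ i) < v) with hT
  have hTcard : k + 1 - j ≤ T.card := by
    have hsum : Small.card + T.card = (Finset.Iic kf).card :=
      Finset.card_filter_add_card_filter_not _
    have hIic : (Finset.Iic kf).card = k + 1 := by simp [Fin.card_Iic, hkf]
    omega
  -- some element of T has index ≤ j
  have hexT : ∃ i ∈ T, (i : ℕ) ≤ j := by
    by_contra hcon
    push_neg at hcon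
    have hsub : T ⊆ Finset.Ioc jf kf := by
      intro i hi
      have h1 : i ∈ Finset.Iic kf := (Finset.mem_filter.mp hi).1
      have h2 : j < (i : ℕ) := hcon i hi
      rw [Finset.mem_Ioc]
      exact ⟨h2, Finset.mem_Iic.mp h1⟩
    have := Finset.card_le_card hsub
    rw [Fin.card_Ioc] at this
    simp only [hjf, hkf] at this
    omega
  obtain ⟨i, hiT, hij⟩ := hexT
  refine ⟨(i : ℕ), hij, ?_⟩
  have hiv : ¬ r (σ i) < v := (Finset.mem_filter.mp hiT).2
  have hin : (i : ℕ) < n := i.isLt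
  rw [relSeq]
  rw [dif_pos hin]
  have : (⟨(i : ℕ), hin⟩ : Fin n) = i := Fin.eta i hin
  rw [this]
  exact not_lt.mp hiv

lemma compTime_pointwise {n : ℕ} (r : Fin n → ℝ) (p : ℝ) (hp : 0 < p)
    (π σ : Equiv.Perm (Fin n))
    (hsorted : ∀ k l : Fin n, k ≤ l → r (π k) ≤ r (π l))
    {k : ℕ} (hk : k < n) :
    compTime p (relSeq r π) k ≤ compTime p (relSeq r σ) k := by
  rw [compTime_le_iff]
  intro j hj
  obtain ⟨i, hij, hiv⟩ := exists_early_big r π σ hsorted hj hk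
  have h1 : relSeq r π j = r (π ⟨j, lt_of_le_of_lt hj hk⟩) := by
    rw [relSeq, dif_pos (lt_of_le_of_lt hj hk)]
  have h2 : ((k + 1 - j : ℕ) : ℝ) ≤ ((k + 1 - i : ℕ) : ℝ) := by
    exact_mod_cast Nat.sub_le_sub_left hij (k + 1)
  calc relSeq r π j + ((k + 1 - j : ℕ) : ℝ) * p
      ≤ relSeq r σ i + ((k + 1 - i : ℕ) : ℝ) * p := by
        rw [h1]
        exact add_le_add hiv (mul_le_mul_of_nonneg_right h2 hp.le)
    _ ≤ compTime p (relSeq r σ) k := le_compTime p _ (hij.trans hj)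

/-- With equal processing times and no precedence constraints, processing the
jobs in nondecreasing order of release dates minimizes the total completion
time. -/
theorem sorted_by_release_optimal {n : ℕ} (r : Fin n → ℝ) (p : ℝ) (hp : 0 < p)
    (hr : ∀ j, 0 ≤ r j) (π : Equiv.Perm (Fin n))
    (hsorted : ∀ k l : Fin n, k ≤ l → r (π k) ≤ r (π l)) :
    ∀ σ : Equiv.Perm (Fin n),
      ∑ k ∈ Finset.range n, compTime p (relSeq r π) k ≤
        ∑ k ∈ Finset.range n, compTime p (relSeq r σ) k := by
  intro σ
  refine Finset.sum_le_sum fun k hk => ?_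
  exact compTime_pointwise r p hp π σ hsorted (Finset.mem_range.mp hk)
end
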